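/- arXiv:1711.07670 — 2 statements merged into one kernel-verified Lean document; each statement's English description precedes it below -/
import Mathlib

section
/- Let Y be a topological space, X ⊆ Y a subspace, and x₀ ∈ X. Suppose: (i) for every k ≥ 0 and every continuous map φ : Sᵏ → Y with φ(b) = x₀ (b the basepoint of Sᵏ) there exists a continuous homotopy H : Sᵏ × [0,1] → Y with H(·,0) = φ, H(b,t) = x₀ for all t, and H(·,1)(Sᵏ) ⊆ X; and (ii) for every k ≥ 0 and every continuous map Φ : Sᵏ × [0,1] → Y with Φ(s,0), Φ(s,1) ∈ X for all s ∈ Sᵏ and Φ(b,t) = x₀ for all t, there exists a continuous homotopy G : (Sᵏ × [0,1]) × [0,1] → Y with G(·,0) = Φ, G(x,u) = Φ(x) for all u whenever x ∈ Sᵏ × {0,1} ∪ {b} × [0,1], and G(·,1)(Sᵏ × [0,1]) ⊆ X. Then for every k ≥ 0 the inclusion X ↪ Y induces a bijection on homotopy groups πₖ(X, x₀) → πₖ(Y, x₀). -/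
open unitInterval

noncomputable section

/-- The `k`-dimensional sphere `Sᵏ`, as a subspace of `ℝ^{k+1}`. -/
abbrev Sph (k : ℕ) : Set (EuclideanSpace ℝ (Fin (k + 1))) :=
  Metric.sphere (0 : EuclideanSpace ℝ (Fin (k + 1))) 1

/-- The basepoint `b` of the `k`-sphere. -/
def basept (k : ℕ) : Sph k :=
  ⟨EuclideanSpace.single (0 : Fin (k + 1)) (1 : ℝ), by
    simp [mem_sphere_zero_iff_norm, EuclideanSpace.norm_single]⟩

/-- Based continuous maps from the `k`-sphere to a pointed space `(Z, z)`. -/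
def BasedMap (k : ℕ) (Z : Type*) [TopologicalSpace Z] (z : Z) :=
  { f : C(↥(Sph k), Z) // f (basept k) = z }

/-- Based maps from the `k`-sphere, up to homotopy relative to the basepoint. -/
def basedSetoid (k : ℕ) (Z : Type*) [TopologicalSpace Z] (z : Z) :
    Setoid (BasedMap k Z z) :=
  ⟨fun f g => ContinuousMap.HomotopicRel f.1 g.1 {basept k},
    ⟨fun f => ContinuousMap.HomotopicRel.refl f.1,
     fun h => h.symm, fun h h' => h.trans h'⟩⟩

/-- The `k`-th homotopy group `πₖ(Z, z)` as a set: based maps from the `k`-sphere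
modulo based homotopy. -/
def homotopyClasses (k : ℕ) (Z : Type*) [TopologicalSpace Z] (z : Z) :=
  Quotient (basedSetoid k Z z)

/-- The map `πₖ(X, x₀) → πₖ(Y, x₀)` induced by the inclusion of a subspace `X ⊆ Y`. -/
def inducedMap (k : ℕ) {Y : Type*} [TopologicalSpace Y] (X : Set Y) (x₀ : Y)
    (hx₀ : x₀ ∈ X) :
    homotopyClasses k X ⟨x₀, hx₀⟩ → homotopyClasses k Y x₀ :=
  Quotient.map' (s₁ := basedSetoid k X ⟨x₀, hx₀⟩) (s₂ := basedSetoid k Y x₀)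
    (fun f => ⟨(⟨Subtype.val, continuous_subtype_val⟩ : C(↥X, Y)).comp f.1,
      by simp [ContinuousMap.comp_apply, f.2]⟩)
    (fun f g h => h.elim fun H =>
      ⟨H.compContinuousMap (⟨Subtype.val, continuous_subtype_val⟩ : C(↥X, Y))⟩)

/-!
A deformation of a map into `X` is a homotopy relative to whatever it keeps fixed. Surjectivity:
deforming a based sphere in `Y` into `X` by (i) shows it is based-homotopic to a sphere in `X`.
Injectivity: a based homotopy in `Y` between two spheres in `X` is a sphere-cylinder with ends in
`X`; deforming it into `X` rel its ends and basepoint line by (ii) gives a based homotopy in `X`.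
-/

theorem ContinuousMap.homotopicRel_of_cylinder {S Z : Type*} [TopologicalSpace S]
    [TopologicalSpace Z] {f g : C(S, Z)} {A : Set S} (H : S × I → Z) (hH : Continuous H)
    (h0 : ∀ s, H (s, 0) = f s) (h1 : ∀ s, H (s, 1) = g s)
    (hA : ∀ s ∈ A, ∀ t, H (s, t) = f s) :
    f.HomotopicRel g A :=
  ⟨{ toFun := fun p => H (p.2, p.1)
     continuous_toFun := hH.comp continuous_swap
     map_zero_left := h0
     map_one_left := h1
     prop' := fun t s hs => hA s hs t }⟩

section

variable {Y : Type*} [TopologicalSpace Y] {X : Set Y} {x₀ : Y} {hx₀ : x₀ ∈ X} {k : ℕ}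

theorem inducedMap_surjective
    (hyp₁ : ∀ φ : ↥(Sph k) → Y, Continuous φ → φ (basept k) = x₀ →
      ∃ H : ↥(Sph k) × I → Y, Continuous H ∧
        (∀ s, H (s, 0) = φ s) ∧
        (∀ t, H (basept k, t) = x₀) ∧
        (∀ s, H (s, 1) ∈ X)) :
    Function.Surjective (inducedMap k X x₀ hx₀) := by
  rintro ⟨f⟩
  obtain ⟨H, hH, hH0, hHb, hH1⟩ := hyp₁ f.1 f.1.continuous f.2
  refine ⟨⟦⟨⟨fun s => ⟨H (s, 1), hH1 s⟩, (hH.comp (by fun_prop)).subtype_mk _⟩,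
    Subtype.ext (hHb 1)⟩⟧, Quotient.sound ?_⟩
  refine (ContinuousMap.homotopicRel_of_cylinder H hH hH0 (fun _ => rfl) ?_).symm
  rintro _ rfl t
  rw [hHb, f.2]

theorem inducedMap_injective
    (hyp₂ : ∀ Φ : ↥(Sph k) × I → Y, Continuous Φ →
      (∀ s, Φ (s, 0) ∈ X) → (∀ s, Φ (s, 1) ∈ X) → (∀ t, Φ (basept k, t) = x₀) →
      ∃ G : (↥(Sph k) × I) × I → Y, Continuous G ∧
        (∀ x, G (x, 0) = Φ x) ∧
        (∀ (s : ↥(Sph k)) (t u : I), (t = 0 ∨ t = 1 ∨ s = basept k) →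
          G ((s, t), u) = Φ (s, t)) ∧
        (∀ x, G (x, 1) ∈ X)) :
    Function.Injective (inducedMap k X x₀ hx₀) := by
  rintro ⟨f⟩ ⟨g⟩ hfg
  obtain ⟨F⟩ : ContinuousMap.HomotopicRel _ _ {basept k} := Quotient.exact hfg
  have hfb : (f.1 (basept k) : Y) = x₀ := congrArg Subtype.val f.2
  have hFb : ∀ t, F (t, basept k) = x₀ := fun t => (F.eq_fst t rfl).trans hfb
  obtain ⟨G, hG, -, hGfix, hG1⟩ := hyp₂ (fun p => F (p.2, p.1))
    (F.continuous.comp continuous_swap) (fun s => by simp [(f.1 s).2])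
    (fun s => by simp [(g.1 s).2]) hFb
  refine Quotient.sound (ContinuousMap.homotopicRel_of_cylinder
    (fun p => ⟨G (p, 1), hG1 p⟩) ((hG.comp (by fun_prop)).subtype_mk _) (fun s => ?_)
    (fun s => ?_) ?_)
  · exact Subtype.ext ((hGfix s 0 1 (.inl rfl)).trans (F.apply_zero s))
  · exact Subtype.ext ((hGfix s 1 1 (.inr (.inl rfl))).trans (F.apply_one s))
  · rintro _ rfl t
    exact Subtype.ext ((hGfix _ t 1 (.inr (.inr rfl))).trans ((hFb t).trans hfb.symm))

end

/-- If the pair `(Y, X)` satisfies the formal h-principle (for a sphere with basepoint,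
and for a sphere-cylinder relative to its ends and the basepoint line), then the
inclusion `X ↪ Y` induces a bijection on all homotopy groups. -/
theorem formal_h_principle_inclusion_pi_bijective
    {Y : Type*} [TopologicalSpace Y] (X : Set Y) (x₀ : Y) (hx₀ : x₀ ∈ X)
    (hyp₁ : ∀ (k : ℕ) (φ : ↥(Sph k) → Y), Continuous φ → φ (basept k) = x₀ →
      ∃ H : ↥(Sph k) × I → Y, Continuous H ∧
        (∀ s, H (s, 0) = φ s) ∧
        (∀ t, H (basept k, t) = x₀) ∧
        (∀ s, H (s, 1) ∈ X))
    (hyp₂ : ∀ (k : ℕ) (Φ : ↥(Sph k) × I → Y), Continuous Φ →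
      (∀ s, Φ (s, 0) ∈ X) → (∀ s, Φ (s, 1) ∈ X) → (∀ t, Φ (basept k, t) = x₀) →
      ∃ G : (↥(Sph k) × I) × I → Y, Continuous G ∧
        (∀ x, G (x, 0) = Φ x) ∧
        (∀ (s : ↥(Sph k)) (t u : I), (t = 0 ∨ t = 1 ∨ s = basept k) →
          G ((s, t), u) = Φ (s, t)) ∧
        (∀ x, G (x, 1) ∈ X)) :
    ∀ k : ℕ, Function.Bijective (inducedMap k X x₀ hx₀) :=
  fun k => ⟨inducedMap_injective (hyp₂ k), inducedMap_surjective (hyp₁ k)⟩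
end
end

section
/- Let M be a connected smooth m-dimensional manifold (without boundary) and let f : M → ℝⁿ be a smooth injective map such that for every point p ∈ M the image of the differential of f at p equals the fixed m-dimensional subspace P = span(e₁, …, eₘ) ⊆ ℝⁿ. Then M is diffeomorphic to an open subset of ℝᵐ. -/
open Manifold

/-!
Let `π : ℝⁿ → ℝᵐ` forget the last `n - m` coordinates. The differential of `g = π ∘ f` is
surjective, hence bijective, so by the inverse function theorem `g` is a local diffeomorphism.
The last `n - m` coordinates of `f` have zero differential, hence are constant on the connected
manifold `M`; therefore `g` is injective because `f` is. An injective local diffeomorphism into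
`ℝᵐ` is a diffeomorphism onto its open range.
-/

open Set Filter Function TopologicalSpace
open scoped Topology

section Boundaryless

variable {E : Type*} [NormedAddCommGroup E] [NormedSpace ℝ E]
  {H : Type*} [TopologicalSpace H] {I : ModelWithCorners ℝ E H} [I.Boundaryless]
  {M : Type*} [TopologicalSpace M] [ChartedSpace H M]

theorem isLocallyConstant_of_mfderiv_eq_zero [IsManifold I 1 M]
    {F : Type*} [NormedAddCommGroup F] [NormedSpace ℝ F] {h : M → F}
    (hh : MDifferentiable I 𝓘(ℝ, F) h) (hd : ∀ p, mfderiv I 𝓘(ℝ, F) h p = 0) :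
    IsLocallyConstant h := by
  refine (IsLocallyConstant.iff_eventually_eq h).2 fun p => ?_
  set c := extChartAt I p
  have hderiv : ∀ y ∈ c.target, HasFDerivAt (h ∘ c.symm) (0 : E →L[ℝ] F) y := by
    intro y hy
    have hsymm : MDifferentiableAt 𝓘(ℝ, E) I c.symm y := by
      have := mdifferentiableWithinAt_extChartAt_symm (I := I) hy
      rwa [I.range_eq_univ, mdifferentiableWithinAt_univ] at this
    have := (hd (c.symm y) ▸ (hh (c.symm y)).hasMFDerivAt).comp y hsymm.hasMFDerivAt
    exact hasMFDerivAt_iff_hasFDerivAt.1 this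
  have hconst : ∀ᶠ y in 𝓝 (c p), (h ∘ c.symm) y = h p := by
    have := (isOpen_extChartAt_target p).isOpen_inter_preimage_of_fderiv_eq_zero
      (fun y hy => (hderiv y hy).differentiableAt.differentiableWithinAt)
      (fun y hy => (hderiv y hy).fderiv) {h p}
    filter_upwards [this.mem_nhds ⟨mem_extChartAt_target p, by simp [c]⟩] with y hy using hy.2
  filter_upwards [continuousAt_extChartAt p hconst, extChartAt_source_mem_nhds (I := I) p]
    with q hq hqs
  rwa [mem_preimage, mem_ofPred_eq, comp_apply, c.left_inv hqs] at hq

theorem apply_eq_of_apply_mfderiv_eq_zero [IsManifold I 1 M] [PreconnectedSpace M]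
    {F G : Type*} [NormedAddCommGroup F] [NormedSpace ℝ F] [NormedAddCommGroup G]
    [NormedSpace ℝ G] {f : M → F} (hf : MDifferentiable I 𝓘(ℝ, F) f) (ℓ : F →L[ℝ] G)
    (hℓ : ∀ p v, ℓ (mfderiv I 𝓘(ℝ, F) f p v) = 0) (p q : M) : ℓ (f p) = ℓ (f q) := by
  have hd (p : M) : mfderiv I 𝓘(ℝ, G) (ℓ ∘ f) p = 0 := by
    rw [(ℓ.hasMFDerivAt.comp p (hf p).hasMFDerivAt).mfderiv]
    ext v
    exact hℓ p v
  exact (isLocallyConstant_of_mfderiv_eq_zero (ℓ.mdifferentiable.comp hf) hd)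
    |>.apply_eq_of_preconnectedSpace p q

theorem exists_localInverse_of_bijective_mfderiv [CompleteSpace E] {n : WithTop ℕ∞}
    [IsManifold I n M] (hn : n ≠ 0) {g : M → E} {p : M} (hg : ContMDiffAt I 𝓘(ℝ, E) n g p)
    (hd : Bijective (mfderiv I 𝓘(ℝ, E) g p)) :
    ∃ k : E → M, (∀ᶠ y in 𝓝 (g p), g (k y) = y) ∧ ContMDiffAt 𝓘(ℝ, E) I n k (g p) := by
  set c := extChartAt I p
  set L : E →L[ℝ] E := mfderiv I 𝓘(ℝ, E) g p
  -- The chart of the target `E` is the identity, so `g ∘ c.symm` is `g` written in charts.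
  have hG : ContDiffAt ℝ n (g ∘ c.symm) (c p) := by
    have := (contMDiffAt_iff.1 hg).2
    simp only [extChartAt_model_space_eq_id, PartialEquiv.refl_coe, id_comp, I.range_eq_univ,
      contDiffWithinAt_univ] at this
    exact this
  have hG' : HasFDerivAt (g ∘ c.symm)
      (ContinuousLinearEquiv.ofBijective L (LinearMap.ker_eq_bot.2 hd.1)
        (LinearMap.range_eq_top.2 hd.2) : E →L[ℝ] E) (c p) := by
    have := (hg.mdifferentiableAt hn).hasMFDerivAt.2
    simp only [writtenInExtChartAt, extChartAt_model_space_eq_id, PartialEquiv.refl_coe,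
      id_comp, I.range_eq_univ] at this
    exact this.hasFDerivAt univ_mem
  have hsymm : ContMDiffAt 𝓘(ℝ, E) I n c.symm (c p) :=
    (contMDiffOn_extChartAt_symm p).contMDiffAt (extChartAt_target_mem_nhds p)
  refine ⟨c.symm ∘ hG.localInverse hG' hn, ?_, ?_⟩
  · have := (hG.hasStrictFDerivAt' hG' hn).eventually_right_inverse
    rwa [comp_apply, c.left_inv (mem_extChartAt_source p)] at this
  · have hcp : (g ∘ c.symm) (c p) = g p := by
      rw [comp_apply, c.left_inv (mem_extChartAt_source p)]
    have hloc := (hG.to_localInverse hG' hn).contMDiffAt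
    have hk := hG.localInverse_apply_image hG' hn
    rw [hcp] at hloc hk
    exact ContMDiffAt.comp _ (by rwa [hk]) hloc

theorem isOpen_range_of_bijective_mfderiv [CompleteSpace E] {n : WithTop ℕ∞} [IsManifold I n M]
    (hn : n ≠ 0) {g : M → E} (hg : ContMDiff I 𝓘(ℝ, E) n g)
    (hd : ∀ p, Bijective (mfderiv I 𝓘(ℝ, E) g p)) : IsOpen (range g) :=
  isOpen_iff_mem_nhds.2 <| forall_mem_range.2 fun p =>
    let ⟨k, hk, _⟩ := exists_localInverse_of_bijective_mfderiv hn (hg p) (hd p)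
    mem_of_superset hk fun y hy => ⟨k y, hy⟩

noncomputable def diffeomorphRangeOfInjective [CompleteSpace E] {n : WithTop ℕ∞}
    [IsManifold I n M] (hn : n ≠ 0) {g : M → E} (hg : ContMDiff I 𝓘(ℝ, E) n g)
    (hinj : Injective g) (hd : ∀ p, Bijective (mfderiv I 𝓘(ℝ, E) g p)) :
    M ≃ₘ^n⟮I, 𝓘(ℝ, E)⟯ (⟨range g, isOpen_range_of_bijective_mfderiv hn hg hd⟩ : Opens E) where
  toEquiv := Equiv.ofInjective g hinj
  contMDiff_toFun p := by
    have := contMDiffAt_iff.1 (hg p)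
    exact contMDiffAt_iff.2 ⟨this.1.codRestrict _, this.2⟩
  contMDiff_invFun := by
    rintro ⟨-, p, rfl⟩
    obtain ⟨k, hk, hks⟩ := exists_localInverse_of_bijective_mfderiv hn (hg p) (hd p)
    refine (contMDiffAt_subtype_iff.2 hks).congr_of_eventuallyEq ?_
    filter_upwards [continuous_subtype_val.continuousAt.eventually hk] with y hy
    exact (Equiv.ofInjective g hinj).symm_apply_eq.2 (Subtype.ext hy.symm)

end Boundaryless

section Straightening

variable {m n : ℕ}

noncomputable def firstCoords (hmn : m ≤ n) :
    EuclideanSpace ℝ (Fin n) →L[ℝ] EuclideanSpace ℝ (Fin m) :=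
  LinearMap.toContinuousLinearMap
    { toFun x := WithLp.toLp 2 fun i => x (Fin.castLE hmn i)
      map_add' _ _ := rfl
      map_smul' _ _ := rfl }

@[simp]
theorem firstCoords_apply (hmn : m ≤ n) (x : EuclideanSpace ℝ (Fin n)) (i : Fin m) :
    firstCoords hmn x i = x (Fin.castLE hmn i) := rfl

def coordSubspace (hmn : m ≤ n) : Submodule ℝ (EuclideanSpace ℝ (Fin n)) :=
  Submodule.span ℝ (range fun i : Fin m => EuclideanSpace.single (Fin.castLE hmn i) (1 : ℝ))

theorem map_firstCoords_coordSubspace (hmn : m ≤ n) :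
    (coordSubspace hmn).map (firstCoords hmn).toLinearMap = ⊤ := by
  have hsingle (i : Fin m) : firstCoords hmn (EuclideanSpace.single (Fin.castLE hmn i) 1) =
      EuclideanSpace.basisFun (Fin m) ℝ i := by
    ext j
    simp [Fin.castLE_inj]
  rw [coordSubspace, Submodule.map_span, ← range_comp]
  simp only [comp_def, ContinuousLinearMap.coe_coe, hsingle]
  exact (EuclideanSpace.basisFun (Fin m) ℝ).toBasis.span_eq

theorem apply_eq_zero_of_mem_coordSubspace (hmn : m ≤ n) {v : EuclideanSpace ℝ (Fin n)}
    (hv : v ∈ coordSubspace hmn) {j : Fin n} (hj : m ≤ j) : v j = 0 := by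
  induction hv using Submodule.span_induction with
  | mem x hx =>
    obtain ⟨i, rfl⟩ := hx
    have : j ≠ Fin.castLE hmn i := by rintro rfl; exact i.isLt.not_ge hj
    simp [this]
  | zero => rfl
  | add x y _ _ hx hy => simp [hx, hy]
  | smul a x _ hx => simp [hx]

theorem eq_of_firstCoords_eq (hmn : m ≤ n) {x y : EuclideanSpace ℝ (Fin n)}
    (hxy : firstCoords hmn x = firstCoords hmn y) (htail : ∀ j : Fin n, m ≤ j → x j = y j) :
    x = y := by
  ext j
  by_cases hj : (j : ℕ) < m
  · simpa using congr($hxy ⟨j, hj⟩)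
  · exact htail j (not_lt.1 hj)

theorem bijective_firstCoords_comp (hmn : m ≤ n)
    (L : EuclideanSpace ℝ (Fin m) →ₗ[ℝ] EuclideanSpace ℝ (Fin n))
    (hL : LinearMap.range L = coordSubspace hmn) :
    Bijective ((firstCoords hmn).toLinearMap ∘ₗ L) := by
  have hsurj : Surjective ((firstCoords hmn).toLinearMap ∘ₗ L) := by
    rw [← LinearMap.range_eq_top, LinearMap.range_comp, hL, map_firstCoords_coordSubspace]
  exact ⟨(LinearMap.injective_iff_surjective_of_finrank_eq_finrank rfl).2 hsurj, hsurj⟩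

variable {H : Type*} [TopologicalSpace H] {M : Type*} [TopologicalSpace M] [ChartedSpace H M]

theorem injective_firstCoords_comp (hmn : m ≤ n) {E : Type*} [NormedAddCommGroup E]
    [NormedSpace ℝ E] {I : ModelWithCorners ℝ E H} [I.Boundaryless] [IsManifold I 1 M]
    [PreconnectedSpace M] {f : M → EuclideanSpace ℝ (Fin n)}
    (hf : MDifferentiable I 𝓘(ℝ, EuclideanSpace ℝ (Fin n)) f) (hinj : Injective f)
    (hder : ∀ p v, mfderiv I 𝓘(ℝ, EuclideanSpace ℝ (Fin n)) f p v ∈ coordSubspace hmn) :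
    Injective (firstCoords hmn ∘ f) := fun p q hpq =>
  hinj <| eq_of_firstCoords_eq hmn hpq fun j hj =>
    apply_eq_of_apply_mfderiv_eq_zero hf (EuclideanSpace.proj j)
      (fun p v => apply_eq_zero_of_mem_coordSubspace hmn (hder p v) hj) p q

theorem bijective_mfderiv_firstCoords_comp (hmn : m ≤ n)
    {I : ModelWithCorners ℝ (EuclideanSpace ℝ (Fin m)) H} {f : M → EuclideanSpace ℝ (Fin n)}
    {p : M} (hf : MDifferentiableAt I 𝓘(ℝ, EuclideanSpace ℝ (Fin n)) f p)
    (hder : LinearMap.range (mfderiv I 𝓘(ℝ, EuclideanSpace ℝ (Fin n)) f p :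
      TangentSpace I p →ₗ[ℝ] TangentSpace 𝓘(ℝ, EuclideanSpace ℝ (Fin n)) (f p)) =
        coordSubspace hmn) :
    Bijective (mfderiv I 𝓘(ℝ, EuclideanSpace ℝ (Fin m)) (firstCoords hmn ∘ f) p) := by
  rw [((firstCoords hmn).hasMFDerivAt.comp p hf.hasMFDerivAt).mfderiv]
  exact bijective_firstCoords_comp hmn _ hder

end Straightening

/-- If `f : M → ℝⁿ` is a smooth injective map from a connected smooth `m`-manifold
(without boundary) whose differential at every point has image equal to the fixed
subspace `P = span(e₁, …, eₘ) ⊆ ℝⁿ`, then `M` is diffeomorphic to an open subset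
of `ℝᵐ`. -/
theorem diffeomorph_open_subset_of_straightened
    {m n : ℕ} (hmn : m ≤ n)
    {M : Type*} [TopologicalSpace M]
    [ChartedSpace (EuclideanSpace ℝ (Fin m)) M]
    [IsManifold (𝓡 m) (⊤ : ℕ∞) M] [ConnectedSpace M]
    (f : M → EuclideanSpace ℝ (Fin n))
    (hf : ContMDiff (𝓡 m) (𝓡 n) (⊤ : ℕ∞) f)
    (hinj : Function.Injective f)
    (hder : ∀ p : M, LinearMap.range (mfderiv (𝓡 m) (𝓡 n) f p : TangentSpace (𝓡 m) p →ₗ[ℝ] TangentSpace (𝓡 n) (f p)) =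
      Submodule.span ℝ (Set.range fun i : Fin m =>
        EuclideanSpace.single (Fin.castLE hmn i) (1 : ℝ))) :
    ∃ u : TopologicalSpace.Opens (EuclideanSpace ℝ (Fin m)),
      Nonempty (Diffeomorph (𝓡 m) (𝓡 m) M u (⊤ : ℕ∞)) := by
  have hfd := hf.mdifferentiable (by simp)
  have hginj := injective_firstCoords_comp hmn hfd hinj fun p v =>
    (hder p).le (LinearMap.mem_range_self _ v)
  exact ⟨_, ⟨diffeomorphRangeOfInjective (by simp) ((firstCoords hmn).contMDiff.comp hf) hginj
    fun p => bijective_mfderiv_firstCoords_comp hmn (hfd p) (hder p)⟩⟩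
end
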